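/- Let F ⊆ I_uf, Θ ⊆ ℤ^I, and let S = {s_g : g∈Θ} and Z = {z_g : g∈Θ} be Θ-pointed families with ⊕_{g∈Θ} ℤ·s_g = ⊕_{g∈Θ} ℤ·z_g as ℤ-submodules of LP. Then ⊕_{g∈Θ} ℤ·frz_{F,g}(s_g) = ⊕_{g∈Θ} ℤ·frz_{F,g}(z_g); in particular {frz_{F,g}(z_g) : g∈Θ} is a ℤ-basis of frz_F^S A^Θ := ⊕_{g∈Θ} ℤ·frz_{F,g}(s_g). -/

import Mathlib

/-!
Pointed elements are unitriangular for the dominance order `a ⪯ b ⟺ a ∈ b + p*(ℕ^{I_uf})`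
(`Dominated a b`), which is a partial order because `p*` is injective. Reading off the
coefficient of a `⪯`-maximal index shows that pointed families are linearly independent, and
that in `z_g = ∑ₕ lₕ s_h` every `h` with `lₕ ≠ 0` satisfies `h ⪯ g`. For `h = g + p*(n₀)` the
element `frz_{F,g}(s_h)` is `frz_{F,h}(s_h)` or `0`, according as `supp n₀` avoids `F` or not,
so `frz_{F,g}(z_g)` lies in the span of the `frz_{F,h}(s_h)`; by symmetry the two spans agree.
Finally `frz_{F,g}(z_g)` is again `g`-pointed, hence these elements are independent.
-/

noncomputable section

namespace CAFreeze

variable {I : Type*} [Fintype I] [DecidableEq I]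

/-- The Laurent polynomial ring LP = ℤ[x_i^{±1} : i ∈ I], modeled as the group algebra of
ℤ^I over ℤ. -/
abbrev LP (I : Type*) := AddMonoidAlgebra ℤ (I → ℤ)

/-- The monomial x^m for an exponent vector m ∈ ℤ^I. -/
def mono (m : I → ℤ) : LP I := AddMonoidAlgebra.single m 1

/-- The coefficient of the monomial x^m in z ∈ LP. -/
def coeff (z : LP I) (m : I → ℤ) : ℤ := (AddMonoidAlgebra.coeff z : (I → ℤ) →₀ ℤ) m

variable (Iuf : Finset I) (Bt : I → {i // i ∈ Iuf} → ℤ)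

/-- The linear map p* : ℤ^{I_uf} → ℤ^I, p*(n) = B̃·n. -/
def pstar (n : {i // i ∈ Iuf} → ℤ) : I → ℤ := fun i => ∑ kk : {i // i ∈ Iuf}, Bt i kk * n kk

/-- p*(n) for n ∈ ℕ^{I_uf}. -/
def pstarN (n : {i // i ∈ Iuf} → ℕ) : I → ℤ := pstar Iuf Bt fun kk => (n kk : ℤ)

/-- supp n = {k ∈ I_uf : n_k ≠ 0}, as a subset of I. -/
def suppn (n : {i // i ∈ Iuf} → ℕ) : Set I := {i | ∃ h : i ∈ Iuf, n ⟨i, h⟩ ≠ 0}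

/-- LP_{⪯m}: the ℤ-submodule of LP spanned by the monomials x^{m+p*(n)}, n ∈ ℕ^{I_uf}. -/
def LPle (m : I → ℤ) : Submodule ℤ (LP I) :=
  Submodule.span ℤ {z : LP I | ∃ n : {i // i ∈ Iuf} → ℕ, z = mono (m + pstarN Iuf Bt n)}

open Classical in
/-- The freezing operator frz_{F,m}: it keeps the monomials x^{m+p*(n)} with
supp n ∩ F = ∅ and kills the monomials x^{m+p*(n)} with supp n ∩ F ≠ ∅. -/
def frz (F : Finset I) (m : I → ℤ) (z : LP I) : LP I :=
  AddMonoidAlgebra.ofCoeff <| Finsupp.filter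
    (fun e => ∃ n : {i // i ∈ Iuf} → ℕ, e = m + pstarN Iuf Bt n ∧ suppn Iuf n ∩ (F : Set I) = ∅) (AddMonoidAlgebra.coeff z)

/-- z ∈ LP is pointed at g: z = Σ_{n ∈ ℕ^{I_uf}} c_n x^{g+p*(n)} with c_0 = 1. -/
def Pointed (g : I → ℤ) (z : LP I) : Prop :=
  coeff z g = 1 ∧
    ∀ e ∈ (AddMonoidAlgebra.coeff z : (I → ℤ) →₀ ℤ).support, ∃ n : {i // i ∈ Iuf} → ℕ, e = g + pstarN Iuf Bt n

/-- supp z = ∪_{c_n ≠ 0} supp n, for a g-pointed z = Σ_n c_n x^{g+p*(n)}. -/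
def suppz (g : I → ℤ) (z : LP I) : Set I :=
  ⋃ n ∈ {n : {i // i ∈ Iuf} → ℕ | coeff z (g + pstarN Iuf Bt n) ≠ 0}, suppn Iuf n

/-- suppDim z ∈ ℕ^{I_uf}: the coordinatewise maximum of {n : c_n ≠ 0}, for a g-pointed
z = Σ_n c_n x^{g+p*(n)}. -/
def suppDim (g : I → ℤ) (z : LP I) : {i // i ∈ Iuf} → ℕ :=
  fun kk => sSup {d : ℕ | ∃ n : {i // i ∈ Iuf} → ℕ, coeff z (g + pstarN Iuf Bt n) ≠ 0 ∧ n kk = d}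

end CAFreeze

namespace CAFreeze

variable {I : Type*}

def Dominated (Iuf : Finset I) (Bt : I → {i // i ∈ Iuf} → ℤ) (a b : I → ℤ) : Prop :=
  ∃ n : {i // i ∈ Iuf} → ℕ, a = b + pstarN Iuf Bt n

section

variable {Iuf : Finset I} {Bt : I → {i // i ∈ Iuf} → ℤ} {ι : Type*}

lemma pstarN_add (n n' : {i // i ∈ Iuf} → ℕ) :
    pstarN Iuf Bt (n + n') = pstarN Iuf Bt n + pstarN Iuf Bt n' := by
  funext i
  simp [pstarN, pstar, mul_add, Finset.sum_add_distrib]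

@[simp]
lemma pstarN_zero : pstarN Iuf Bt 0 = 0 := by
  funext i
  simp [pstarN, pstar]

lemma pstarN_injective (hfull : Function.Injective (pstar Iuf Bt)) :
    Function.Injective (pstarN Iuf Bt) := fun _ _ h =>
  funext fun k => by exact_mod_cast congrFun (hfull h) k

@[simp]
lemma suppn_zero : suppn Iuf (0 : {i // i ∈ Iuf} → ℕ) = ∅ := by
  ext i
  simp [suppn]

lemma suppn_add (n n' : {i // i ∈ Iuf} → ℕ) :
    suppn Iuf (n + n') = suppn Iuf n ∪ suppn Iuf n' := by
  ext i
  simp only [suppn, Set.mem_ofPred_eq, Set.mem_union, Pi.add_apply, ne_eq, Nat.add_eq_zero_iff,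
    not_and_or, exists_or]

lemma Dominated.refl (a : I → ℤ) : Dominated Iuf Bt a a :=
  ⟨0, by simp⟩

lemma Dominated.trans {a b c : I → ℤ} (hab : Dominated Iuf Bt a b) (hbc : Dominated Iuf Bt b c) :
    Dominated Iuf Bt a c := by
  obtain ⟨n, rfl⟩ := hab
  obtain ⟨n', rfl⟩ := hbc
  exact ⟨n' + n, by rw [pstarN_add, add_assoc]⟩

lemma Dominated.antisymm (hfull : Function.Injective (pstar Iuf Bt)) {a b : I → ℤ}
    (hab : Dominated Iuf Bt a b) (hba : Dominated Iuf Bt b a) : a = b := by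
  obtain ⟨n, rfl⟩ := hab
  obtain ⟨n', hn'⟩ := hba
  have hsum : n + n' = 0 := pstarN_injective hfull <| add_left_cancel (a := b) <| by
    rw [pstarN_add, pstarN_zero, add_zero, ← add_assoc, ← hn']
  rw [(add_eq_zero.1 hsum).1, pstarN_zero, add_zero]

lemma exists_dominated_maximal (hfull : Function.Injective (pstar Iuf Bt))
    {t : Finset (I → ℤ)} {a : I → ℤ} (ha : a ∈ t) :
    ∃ b ∈ t, Dominated Iuf Bt a b ∧ ∀ c ∈ t, Dominated Iuf Bt b c → c = b := by
  -- `I → ℤ` already carries the pointwise order, so this preorder is passed explicitly.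
  let dominance : Preorder (I → ℤ) :=
    { le := Dominated Iuf Bt
      lt a b := Dominated Iuf Bt a b ∧ ¬Dominated Iuf Bt b a
      le_refl := Dominated.refl
      le_trans _ _ _ := Dominated.trans
      lt_iff_le_not_ge _ _ := Iff.rfl }
  obtain ⟨b, hab, hbt, hmax⟩ := @Finset.exists_le_maximal _ dominance _ t ha
  exact ⟨b, hbt, hab, fun c hc hbc => Dominated.antisymm hfull (hmax hc hbc) hbc⟩

lemma Pointed.dominated {g e : I → ℤ} {z : LP I} (hz : Pointed Iuf Bt g z)
    (he : coeff z e ≠ 0) : Dominated Iuf Bt e g :=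
  hz.2 e (Finsupp.mem_support_iff.2 he)

lemma coeff_linearCombination (v : ι → LP I) (l : ι →₀ ℤ) (e : I → ℤ) :
    coeff (Finsupp.linearCombination ℤ v l) e = ∑ i ∈ l.support, l i * coeff (v i) e := by
  simp only [coeff, Finsupp.linearCombination_apply, Finsupp.sum, AddMonoidAlgebra.coeff_sum,
    Finset.sum_apply', AddMonoidAlgebra.coeff_smul_apply, smul_eq_mul]

lemma coeff_linearCombination_of_maximal {u : ι → I → ℤ} (hu : Function.Injective u)
    {v : ι → LP I} {l : ι →₀ ℤ} (hv : ∀ i ∈ l.support, Pointed Iuf Bt (u i) (v i))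
    {m : ι} (hm : m ∈ l.support)
    (hmax : ∀ i ∈ l.support, Dominated Iuf Bt (u m) (u i) → u i = u m) :
    coeff (Finsupp.linearCombination ℤ v l) (u m) = l m := by
  rw [coeff_linearCombination, Finset.sum_eq_single_of_mem m hm, (hv m hm).1, mul_one]
  intro i hi him
  by_contra hne
  exact him (hu (hmax i hi ((hv i hi).dominated (right_ne_zero_of_mul hne))))

theorem linearIndependent_of_pointed (hfull : Function.Injective (pstar Iuf Bt))
    {u : ι → I → ℤ} (hu : Function.Injective u) {v : ι → LP I}
    (hv : ∀ i, Pointed Iuf Bt (u i) (v i)) : LinearIndependent ℤ v := by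
  classical
  rw [linearIndependent_iff]
  intro l hl
  by_contra hne
  obtain ⟨i, hi⟩ := Finsupp.support_nonempty_iff.2 hne
  obtain ⟨_, hb, -, hmax⟩ := exists_dominated_maximal hfull (Finset.mem_image_of_mem u hi)
  obtain ⟨m, hm, rfl⟩ := Finset.mem_image.1 hb
  have hcoeff := coeff_linearCombination_of_maximal hu (fun i _ => hv i) hm
    fun j hj => hmax _ (Finset.mem_image_of_mem u hj)
  rw [hl] at hcoeff
  exact Finsupp.mem_support_iff.1 hm hcoeff.symm

lemma dominated_of_linearCombination_eq_pointed (hfull : Function.Injective (pstar Iuf Bt))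
    {s : (I → ℤ) → LP I} {l : (I → ℤ) →₀ ℤ} (hs : ∀ h ∈ l.support, Pointed Iuf Bt h (s h))
    {g : I → ℤ} {w : LP I} (hw : Pointed Iuf Bt g w)
    (heq : Finsupp.linearCombination ℤ s l = w) {h : I → ℤ} (hh : h ∈ l.support) :
    Dominated Iuf Bt h g := by
  obtain ⟨m, hm, hhm, hmax⟩ := exists_dominated_maximal hfull hh
  have hcoeff : coeff w m = l m :=
    heq ▸ coeff_linearCombination_of_maximal (u := id) Function.injective_id hs hm hmax
  exact hhm.trans (hw.dominated (hcoeff ▸ Finsupp.mem_support_iff.1 hm))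

variable (Iuf Bt) in
def frzLinearMap (F : Finset I) (m : I → ℤ) : LP I →ₗ[ℤ] LP I where
  toFun := frz Iuf Bt F m
  map_add' _ _ := by simp [frz, Finsupp.filter_add]
  map_smul' _ _ := by
    simp only [frz, AddMonoidAlgebra.coeff_smul, Finsupp.filter_smul, AddMonoidAlgebra.ofCoeff_smul,
      RingHom.id_apply]

open Classical in
lemma coeff_frz (F : Finset I) (m : I → ℤ) (z : LP I) (e : I → ℤ) :
    coeff (frz Iuf Bt F m z) e =
      if ∃ n, e = m + pstarN Iuf Bt n ∧ suppn Iuf n ∩ (F : Set I) = ∅ then coeff z e else 0 :=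
  Finsupp.filter_apply _ _ _

lemma coeff_frz_eq_zero {F : Finset I} {m e : I → ℤ} {z : LP I} (he : coeff z e = 0) :
    coeff (frz Iuf Bt F m z) e = 0 := by
  rw [coeff_frz, he, ite_self]

open Classical in
lemma coeff_frz_add_pstarN (hfull : Function.Injective (pstar Iuf Bt)) (F : Finset I)
    (m : I → ℤ) (z : LP I) (n : {i // i ∈ Iuf} → ℕ) :
    coeff (frz Iuf Bt F m z) (m + pstarN Iuf Bt n) =
      if suppn Iuf n ∩ (F : Set I) = ∅ then coeff z (m + pstarN Iuf Bt n) else 0 := by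
  rw [coeff_frz]
  refine if_congr ⟨?_, fun hn => ⟨n, rfl, hn⟩⟩ rfl rfl
  rintro ⟨n', hn', hn'F⟩
  rwa [pstarN_injective hfull (add_left_cancel hn')]

lemma frz_pointed {F : Finset I} {g : I → ℤ} {z : LP I} (hz : Pointed Iuf Bt g z) :
    Pointed Iuf Bt g (frz Iuf Bt F g z) := by
  classical
  refine ⟨?_, fun e he => hz.dominated fun hze => ?_⟩
  · rw [coeff_frz, if_pos ⟨0, by simp, by simp⟩, hz.1]
  · exact Finsupp.mem_support_iff.1 he (coeff_frz_eq_zero hze)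

open Classical in
lemma frz_eq_ite_of_dominated (hfull : Function.Injective (pstar Iuf Bt)) (F : Finset I)
    {g h : I → ℤ} {n₀ : {i // i ∈ Iuf} → ℕ} (hh : h = g + pstarN Iuf Bt n₀) {x : LP I}
    (hx : ∀ e ∈ (AddMonoidAlgebra.coeff x).support, Dominated Iuf Bt e h) :
    frz Iuf Bt F g x = if suppn Iuf n₀ ∩ (F : Set I) = ∅ then frz Iuf Bt F h x else 0 := by
  ext e
  change coeff _ e = coeff _ e
  by_cases hxe : coeff x e = 0
  · rw [coeff_frz_eq_zero hxe, apply_ite (coeff · e), coeff_frz_eq_zero hxe]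
    exact (ite_self 0).symm
  obtain ⟨n, rfl⟩ := hx e (Finsupp.mem_support_iff.2 hxe)
  have he : h + pstarN Iuf Bt n = g + pstarN Iuf Bt (n₀ + n) := by
    rw [hh, pstarN_add, add_assoc]
  rw [apply_ite (coeff · (h + pstarN Iuf Bt n)), coeff_frz_add_pstarN hfull F h, he,
    coeff_frz_add_pstarN hfull F g, ← he, suppn_add, Set.union_inter_distrib_right]
  by_cases h₀ : suppn Iuf n₀ ∩ (F : Set I) = ∅ <;> by_cases hn : suppn Iuf n ∩ (F : Set I) = ∅ <;>
    simp [h₀, hn, coeff]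

lemma span_frz_le (hfull : Function.Injective (pstar Iuf Bt)) (F : Finset I)
    {Θ : Set (I → ℤ)} {s z : (I → ℤ) → LP I}
    (hs : ∀ g ∈ Θ, Pointed Iuf Bt g (s g)) (hz : ∀ g ∈ Θ, Pointed Iuf Bt g (z g))
    (hle : Submodule.span ℤ (z '' Θ) ≤ Submodule.span ℤ (s '' Θ)) :
    Submodule.span ℤ ((fun g => frz Iuf Bt F g (z g)) '' Θ) ≤
      Submodule.span ℤ ((fun g => frz Iuf Bt F g (s g)) '' Θ) := by
  rw [Submodule.span_le]
  rintro _ ⟨g, hg, rfl⟩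
  obtain ⟨l, hlΘ, hl⟩ := (Finsupp.mem_span_image_iff_linearCombination ℤ).1
    (hle (Submodule.subset_span ⟨g, hg, rfl⟩))
  have hls : ∀ h ∈ l.support, Pointed Iuf Bt h (s h) := fun h hh => hs h (hlΘ hh)
  change frzLinearMap Iuf Bt F g (z g) ∈ _
  rw [← hl, Finsupp.apply_linearCombination, Finsupp.linearCombination_apply]
  refine Submodule.finsuppSum_mem _ _ _ _ fun h hlh => Submodule.smul_mem _ _ ?_
  have hh : h ∈ l.support := Finsupp.mem_support_iff.2 hlh
  obtain ⟨n₀, hn₀⟩ := dominated_of_linearCombination_eq_pointed hfull hls (hz g hg) hl hh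
  change frz Iuf Bt F g (s h) ∈ _
  rw [frz_eq_ite_of_dominated hfull F hn₀ (hls h hh).2]
  split_ifs
  · exact Submodule.subset_span ⟨h, hlΘ hh, rfl⟩
  · exact Submodule.zero_mem _

end

variable [Fintype I] [DecidableEq I] (Iuf : Finset I) (Bt : I → {i // i ∈ Iuf} → ℤ)

theorem frz_bases_with_transitions (hfull : Function.Injective (pstar Iuf Bt))
    (F : Finset I)
    (Θ : Set (I → ℤ)) (s z : (I → ℤ) → LP I)
    (hs : ∀ g ∈ Θ, Pointed Iuf Bt g (s g))
    (hz : ∀ g ∈ Θ, Pointed Iuf Bt g (z g))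
    (hAeq : Submodule.span ℤ (s '' Θ) = Submodule.span ℤ (z '' Θ)) :
    Submodule.span ℤ ((fun g => frz Iuf Bt F g (s g)) '' Θ) =
      Submodule.span ℤ ((fun g => frz Iuf Bt F g (z g)) '' Θ) ∧
    LinearIndependent ℤ (fun g : Θ => frz Iuf Bt F (g : I → ℤ) (z (g : I → ℤ))) :=
  ⟨le_antisymm (span_frz_le hfull F hz hs hAeq.le) (span_frz_le hfull F hs hz hAeq.ge),
    linearIndependent_of_pointed hfull Subtype.val_injective fun g => frz_pointed (hz g g.2)⟩

end CAFreeze
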